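/- Let ψ have Fourier support Λ ⊂ Γ, both finite subsets of ℤ², and let x₁,…,x_N be zeros of ψ. For each l ∈ Γ:Λ := {l ∈ Γ : l + k ∈ Γ for all k ∈ Λ}, define c_l to be the Fourier coefficient vector (supported in Γ) of exp(2πi⟨l,x⟩)ψ(x). Then {c_l : l ∈ Γ:Λ} is a linearly independent family of left null-space vectors of the feature matrix Φ_Γ(X), and hence rank(Φ_Γ(X)) ≤ |Γ| − |Γ:Λ|. -/
import Mathlib


open scoped Real

noncomputable def trigExp (k : ℤ × ℤ) (x : ℝ × ℝ) : ℂ :=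
  Complex.exp (2 * Real.pi * Complex.I * ((k.1 : ℂ) * (x.1 : ℂ) + (k.2 : ℂ) * (x.2 : ℂ)))

lemma trigExp_add (a b : ℤ × ℤ) (x : ℝ × ℝ) :
    trigExp (a + b) x = trigExp a x * trigExp b x := by
  unfold trigExp
  rw [← Complex.exp_add]
  congr 1
  simp only [Prod.fst_add, Prod.snd_add]
  push_cast
  ring

/-- Over-estimated support: let `ψ` have Fourier support `Λ ⊆ Γ` and vanish at the
points `x₁,…,x_N`. For each `l ∈ Γ:Λ = {l ∈ Γ : l + k ∈ Γ ∀ k ∈ Λ}`, the shifted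
coefficient vector `c_l(k) = c(k − l)` (the Fourier coefficients of
`exp(2πi⟨l,x⟩)ψ(x)`) is a left null-space vector of the feature matrix `Φ_Γ(X)`;
the family `{c_l}` is linearly independent, whence
`rank Φ_Γ(X) ≤ |Γ| − |Γ:Λ|`. -/
theorem shifted_filters_nullspace (Λ Γ : Finset (ℤ × ℤ)) (hΛΓ : Λ ⊆ Γ)
    (c : ℤ × ℤ → ℂ) (hsupp : ∀ k, c k ≠ 0 → k ∈ Λ) (hc : c ≠ 0)
    (N : ℕ) (x : Fin N → ℝ × ℝ)
    (hzero : ∀ i, ∑ k ∈ Λ, c k * trigExp k (x i) = 0)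
    (Φ : Matrix {k // k ∈ Γ} (Fin N) ℂ)
    (hΦ : ∀ k i, Φ k i = trigExp k.1 (x i))
    (ΓΛ : Finset (ℤ × ℤ))
    (hΓΛ : ΓΛ = Γ.filter (fun l => ∀ k ∈ Λ, l + k ∈ Γ)) :
    LinearIndependent ℂ
      (fun l : {l // l ∈ ΓΛ} => (fun k : {k // k ∈ Γ} => c (k.1 - l.1))) ∧
    (∀ l ∈ ΓΛ, ∀ i, ∑ k : {k // k ∈ Γ}, c (k.1 - l) * Φ k i = 0) ∧
    Φ.rank ≤ Γ.card - ΓΛ.card := by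
  classical
  -- Part 2: null-space property
  have hnull : ∀ l ∈ ΓΛ, ∀ i, ∑ k : {k // k ∈ Γ}, c (k.1 - l) * Φ k i = 0 := by
    intro l hl i
    rw [hΓΛ, Finset.mem_filter] at hl
    have h1 : ∑ k : {k // k ∈ Γ}, c (k.1 - l) * Φ k i
        = ∑ k ∈ Γ, c (k - l) * trigExp k (x i) := by
      rw [← Finset.sum_coe_sort Γ (fun k => c (k - l) * trigExp k (x i))]
      exact Finset.sum_congr rfl (fun k _ => by rw [hΦ])
    have h2 : ∑ k ∈ Γ, c (k - l) * trigExp k (x i)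
        = ∑ k ∈ Λ.image (fun m => l + m), c (k - l) * trigExp k (x i) := by
      refine (Finset.sum_subset ?_ ?_).symm
      · intro k hk
        obtain ⟨m, hm, rfl⟩ := Finset.mem_image.1 hk
        exact hl.2 m hm
      · intro k _ hk
        have : c (k - l) = 0 := by
          by_contra h
          exact hk (Finset.mem_image.2 ⟨k - l, hsupp _ h, by ring⟩)
        rw [this, zero_mul]
    have h3 : ∑ k ∈ Λ.image (fun m => l + m), c (k - l) * trigExp k (x i)
        = ∑ m ∈ Λ, c m * trigExp (l + m) (x i) := by
      rw [Finset.sum_image (fun a _ b _ h => by simpa using h)]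
      exact Finset.sum_congr rfl (fun m _ => by rw [add_sub_cancel_left])
    have h4 : ∑ m ∈ Λ, c m * trigExp (l + m) (x i)
        = trigExp l (x i) * ∑ m ∈ Λ, c m * trigExp m (x i) := by
      rw [Finset.mul_sum]
      exact Finset.sum_congr rfl (fun m _ => by rw [trigExp_add]; ring)
    rw [h1, h2, h3, h4, hzero, mul_zero]
  -- Part 1: linear independence
  have hLI : LinearIndependent ℂ
      (fun l : {l // l ∈ ΓΛ} => (fun k : {k // k ∈ Γ} => c (k.1 - l.1))) := by
    rw [Fintype.linearIndependent_iff]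
    intro g hg
    by_contra hne
    push_neg at hne
    obtain ⟨l₁, hl₁⟩ := hne
    set T := Finset.univ.filter (fun l : {l // l ∈ ΓΛ} => g l ≠ 0) with hT
    have hTne : T.Nonempty := ⟨l₁, by simp [hT, hl₁]⟩
    obtain ⟨l₀, hl₀T, hl₀max⟩ := T.exists_max_image (fun l => toLex l.1) hTne
    have hm : ∃ m, c m ≠ 0 := by
      by_contra h; push_neg at h; exact hc (funext h)
    obtain ⟨m₁, hm₁⟩ := hm
    set S := Λ.filter (fun m => c m ≠ 0) with hS
    have hSne : S.Nonempty := ⟨m₁, Finset.mem_filter.2 ⟨hsupp _ hm₁, hm₁⟩⟩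
    obtain ⟨m₀, hm₀S, hm₀max⟩ := S.exists_max_image toLex hSne
    have hm₀Λ : m₀ ∈ Λ := (Finset.mem_filter.1 hm₀S).1
    have hcm₀ : c m₀ ≠ 0 := (Finset.mem_filter.1 hm₀S).2
    have hgl₀ : g l₀ ≠ 0 := (Finset.mem_filter.1 hl₀T).2
    have hl₀' : l₀.1 ∈ Γ.filter (fun l => ∀ k ∈ Λ, l + k ∈ Γ) := by
      rw [← hΓΛ]; exact l₀.2
    rw [Finset.mem_filter] at hl₀'
    have hk₀Γ : l₀.1 + m₀ ∈ Γ := hl₀'.2 m₀ hm₀Λ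
    have hg0 := congrFun hg ⟨l₀.1 + m₀, hk₀Γ⟩
    simp only [Finset.sum_apply, Pi.smul_apply, Pi.zero_apply, smul_eq_mul] at hg0
    rw [Finset.sum_eq_single l₀] at hg0
    · rw [add_sub_cancel_left] at hg0
      exact hcm₀ (by
        rcases mul_eq_zero.1 hg0 with h | h
        · exact absurd h hgl₀
        · exact h)
    · intro l _ hlne
      by_contra habs
      have hgl : g l ≠ 0 := fun h => habs (by rw [h, zero_mul])
      have hcl : c (l₀.1 + m₀ - l.1) ≠ 0 := fun h => habs (by rw [h, mul_zero])
      have hlT : l ∈ T := Finset.mem_filter.2 ⟨Finset.mem_univ _, hgl⟩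
      have h5 : toLex l.1 < toLex l₀.1 :=
        lt_of_le_of_ne (hl₀max l hlT)
          (fun h => hlne (Subtype.ext (toLex.injective h)))
      have h6 : toLex (l₀.1 + m₀ - l.1) ≤ toLex m₀ :=
        hm₀max _ (Finset.mem_filter.2 ⟨hsupp _ hcl, hcl⟩)
      have h7 : toLex (l₀.1 + m₀) < toLex (l₀.1 + m₀) := by
        calc toLex (l₀.1 + m₀) = toLex ((l₀.1 + m₀ - l.1) + l.1) := by
              rw [sub_add_cancel]
          _ = toLex (l₀.1 + m₀ - l.1) + toLex l.1 := toLex_add _ _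
          _ < toLex m₀ + toLex l₀.1 := add_lt_add_of_le_of_lt h6 h5
          _ = toLex (m₀ + l₀.1) := (toLex_add _ _).symm
          _ = toLex (l₀.1 + m₀) := by rw [add_comm]
      exact absurd h7 (lt_irrefl _)
    · intro h
      exact absurd (Finset.mem_univ l₀) h
  -- Part 3: rank bound
  refine ⟨hLI, hnull, ?_⟩
  have hker : ∀ l : {l // l ∈ ΓΛ},
      (fun k : {k // k ∈ Γ} => c (k.1 - l.1)) ∈ LinearMap.ker Φ.transpose.mulVecLin := by
    intro l
    rw [LinearMap.mem_ker]
    funext i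
    have := hnull l.1 l.2 i
    simp only [Matrix.mulVecLin_apply, Matrix.mulVec, dotProduct,
      Matrix.transpose_apply, Pi.zero_apply]
    rw [← this]
    exact Finset.sum_congr rfl (fun k _ => mul_comm _ _)
  set K := LinearMap.ker Φ.transpose.mulVecLin with hK
  have hLI2 : LinearIndependent ℂ
      (fun l : {l // l ∈ ΓΛ} => (⟨_, hker l⟩ : K)) := by
    apply LinearIndependent.of_comp K.subtype
    exact hLI
  have hcard : ΓΛ.card ≤ Module.finrank ℂ K := by
    have := hLI2.fintype_card_le_finrank
    simpa [Fintype.card_coe] using this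
  have hrn : Φ.transpose.rank + Module.finrank ℂ K = Γ.card := by
    have := LinearMap.finrank_range_add_finrank_ker Φ.transpose.mulVecLin
    rw [Module.finrank_pi, Fintype.card_coe] at this
    exact this
  have hrt : Φ.rank = Φ.transpose.rank := (Matrix.rank_transpose Φ).symm
  omega
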